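/- arXiv:1611.08777 — 3 statements merged into one kernel-verified Lean document; each statement's English description precedes it below -/
import Mathlib

section
/- Let γ = (γ_1,…,γ_n) be a weak composition and F ∈ SetSkyFill(γ) with content δ. Then for every 1 ≤ m ≤ n, Σ_{i=1}^m δ_i ≥ Σ_{i=1}^m γ_i (the values occurring in the first m rows are all at most m, and there are Σ_{i≤m} γ_i boxes there, each containing at least one entry). -/
open Finset MvPolynomial

/-- The inversion-triple condition on anchor values `b, a, c`:
`b > c ≥ a` or `c ≥ a > b`. -/
def InvTriple (b a c : ℕ) : Prop := (c < b ∧ a ≤ c) ∨ (a ≤ c ∧ b < a)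

/-- A set-valued skyline filling of shape `γ` (row `i : Fin n` is the `(i+1)`-st row) with
basement `b_i = i`: box `(i, j)` for `1 ≤ j ≤ γ i` carries a nonempty finite set of positive
integers, box `(i, 0)` is the basement `{i + 1}`, and boxes outside the shape are empty. -/
structure SVFilling (n : ℕ) (γ : Fin n → ℕ) where
  box : Fin n → ℕ → Finset ℕ
  basement : ∀ i : Fin n, box i 0 = {(i : ℕ) + 1}
  nonempty : ∀ i : Fin n, ∀ j : ℕ, 1 ≤ j → j ≤ γ i → (box i j).Nonempty
  pos : ∀ i : Fin n, ∀ j : ℕ, ∀ e ∈ box i j, 1 ≤ e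
  outside : ∀ i : Fin n, ∀ j : ℕ, γ i < j → box i j = ∅

namespace SVFilling

variable {n : ℕ} {γ : Fin n → ℕ}

/-- The anchor (= largest) entry of box `(i, j)`. -/
def anchor (F : SVFilling n γ) (i : Fin n) (j : ℕ) : ℕ := (F.box i j).sup id

/-- Semistandardness conditions (S1)-(S4). -/
def IsSemistandard (F : SVFilling n γ) : Prop :=
  (∀ j : ℕ, 1 ≤ j → ∀ i i' : Fin n, i ≠ i' → ∀ e : ℕ, e ∈ F.box i j → e ∉ F.box i' j) ∧
  (∀ i : Fin n, ∀ j : ℕ, 1 ≤ j → j ≤ γ i →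
      ∀ a ∈ F.box i (j - 1), ∀ b ∈ F.box i j, b ≤ a) ∧
  (∀ i i' : Fin n, i < i' →
      (γ i' ≤ γ i → ∀ m : ℕ, m + 1 ≤ γ i' →
        InvTriple (F.anchor i' (m + 1)) (F.anchor i (m + 1)) (F.anchor i m)) ∧
      (γ i < γ i' → ∀ m : ℕ, m ≤ γ i → m + 1 ≤ γ i' →
        InvTriple (F.anchor i m) (F.anchor i' (m + 1)) (F.anchor i' m))) ∧
  (∀ i : Fin n, ∀ j : ℕ, 1 ≤ j → j ≤ γ i → ∀ e ∈ F.box i j, e ≠ F.anchor i j →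
      ∀ i' : Fin n, i' < i → j ≤ γ i' →
        ¬ (e < F.anchor i' j ∧ (j = γ i' ∨ F.anchor i' (j + 1) ≤ e)))

/-- `F.content v` is the number of (non-basement) boxes of `F` containing the value `v`. -/
def content (F : SVFilling n γ) (v : ℕ) : ℕ :=
  ∑ i : Fin n, ((Finset.Icc 1 (γ i)).filter (fun j => v ∈ F.box i j)).card

/-- `|F|`, the total number of entries of `F` (with multiplicity over boxes). -/
def size (F : SVFilling n γ) : ℕ :=
  ∑ i : Fin n, ∑ j ∈ Finset.Icc 1 (γ i), (F.box i j).card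

/-- `F` has content the weak composition `δ` with `n` parts. -/
def HasContent (F : SVFilling n γ) (δ : Fin n → ℕ) : Prop :=
  (∀ i : Fin n, F.content ((i : ℕ) + 1) = δ i) ∧ ∀ v : ℕ, n < v → F.content v = 0

end SVFilling

/-- The (combinatorial) Lascoux atom `L_γ ∈ ℤ[β][x_1, …, x_n]`, where `β` is the polynomial
variable of `ℤ[β] = Polynomial ℤ`. -/
noncomputable def Lascoux (n : ℕ) (γ : Fin n → ℕ) : MvPolynomial (Fin n) (Polynomial ℤ) :=
  ∑ᶠ F : {F : SVFilling n γ // F.IsSemistandard},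
    MvPolynomial.monomial
      (Finsupp.equivFunOnFinite.symm
        (fun i : Fin n => (F : SVFilling n γ).content ((i : ℕ) + 1)))
      (Polynomial.X ^ ((F : SVFilling n γ).size - ∑ i, γ i))

namespace SVFilling

variable {n : ℕ} {γ : Fin n → ℕ}

/-- Condition (S2). -/
def RowsWeaklyDecrease (F : SVFilling n γ) : Prop :=
  ∀ i : Fin n, ∀ j : ℕ, 1 ≤ j → j ≤ γ i →
    ∀ a ∈ F.box i (j - 1), ∀ b ∈ F.box i j, b ≤ a

theorem IsSemistandard.rowsWeaklyDecrease {F : SVFilling n γ} (hF : F.IsSemistandard) :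
    F.RowsWeaklyDecrease :=
  hF.2.1

theorem box_nonempty_of_le (F : SVFilling n γ) {i : Fin n} {j : ℕ} (hj : j ≤ γ i) :
    (F.box i j).Nonempty := by
  rcases Nat.eq_zero_or_pos j with rfl | hpos
  · simp [F.basement]
  · exact F.nonempty i j hpos hj

theorem le_of_mem_box {F : SVFilling n γ} (hF : F.RowsWeaklyDecrease) {i : Fin n} {j e : ℕ}
    (he : e ∈ F.box i j) : e ≤ (i : ℕ) + 1 := by
  induction j generalizing e with
  | zero => exact (mem_singleton.1 (F.basement i ▸ he)).le
  | succ j ih =>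
    have hj : j + 1 ≤ γ i := by
      by_contra! h
      simp [F.outside i _ h] at he
    obtain ⟨a, ha⟩ := F.box_nonempty_of_le (by omega : j ≤ γ i)
    exact (hF i (j + 1) (by omega) hj a ha e he).trans (ih ha)

theorem sum_content_eq_sum_card_inter (F : SVFilling n γ) (s : Finset ℕ) :
    ∑ v ∈ s, F.content v = ∑ i, ∑ j ∈ Icc 1 (γ i), #(F.box i j ∩ s) := by
  simp only [content, card_filter, inter_comm _ s, ← filter_mem_eq_inter]
  rw [sum_comm]
  refine sum_congr rfl fun i _ => ?_
  rw [sum_comm]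

theorem box_subset_image_of_lt {F : SVFilling n γ} (hF : F.RowsWeaklyDecrease) {m : ℕ}
    {i : Fin n} (hi : (i : ℕ) < m) (j : ℕ) :
    F.box i j ⊆
      (univ.filter fun k : Fin n => (k : ℕ) < m).image fun k : Fin n => (k : ℕ) + 1 := by
  intro e he
  have hpos := F.pos i j e he
  have hle := le_of_mem_box hF he
  simp only [mem_image, mem_filter, mem_univ, true_and]
  exact ⟨⟨e - 1, by omega⟩, by simp only; omega, by simp only; omega⟩

theorem le_sum_card_inter_of_box_subset (F : SVFilling n γ) {i : Fin n} {s : Finset ℕ}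
    (hs : ∀ j, F.box i j ⊆ s) : γ i ≤ ∑ j ∈ Icc 1 (γ i), #(F.box i j ∩ s) := by
  simpa using card_nsmul_le_sum (Icc 1 (γ i)) (fun j => #(F.box i j ∩ s)) 1 fun j hj => by
    rw [mem_Icc] at hj
    rw [inter_eq_left.2 (hs j), Nat.one_le_iff_ne_zero, card_ne_zero]
    exact F.nonempty i j hj.1 hj.2

end SVFilling

theorem stmt2_general (n : ℕ) (γ : Fin n → ℕ) (F : SVFilling n γ)
    (hF : F.IsSemistandard) (δ : Fin n → ℕ) (hδ : F.HasContent δ) :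
    ∀ m : ℕ, 1 ≤ m → m ≤ n →
      ∑ i ∈ Finset.univ.filter (fun i : Fin n => (i : ℕ) < m), γ i ≤
        ∑ i ∈ Finset.univ.filter (fun i : Fin n => (i : ℕ) < m), δ i := by
  intro m _ _
  set S := univ.filter fun i : Fin n => (i : ℕ) < m
  set T := S.image fun k : Fin n => (k : ℕ) + 1
  calc ∑ i ∈ S, γ i
      ≤ ∑ i ∈ S, ∑ j ∈ Icc 1 (γ i), #(F.box i j ∩ T) :=
        sum_le_sum fun i hi => F.le_sum_card_inter_of_box_subset
          (SVFilling.box_subset_image_of_lt hF.rowsWeaklyDecrease (mem_filter.1 hi).2)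
    _ ≤ ∑ i, ∑ j ∈ Icc 1 (γ i), #(F.box i j ∩ T) :=
        sum_le_sum_of_subset (subset_univ S)
    _ = ∑ i ∈ S, F.content ((i : ℕ) + 1) := by
        rw [← F.sum_content_eq_sum_card_inter, sum_image fun a _ b _ h => Fin.ext (by omega)]
    _ = ∑ i ∈ S, δ i := sum_congr rfl fun i _ => hδ.1 i

/-- If `F` is a semistandard set-valued skyline filling of shape `γ` with
content `δ`, then for every `1 ≤ m ≤ n` the sum of the first `m` parts of `δ` is at least
the sum of the first `m` parts of `γ`. -/
theorem stmt2 (n : ℕ) (hn : 1 ≤ n) (γ : Fin n → ℕ) (F : SVFilling n γ)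
    (hF : F.IsSemistandard) (δ : Fin n → ℕ) (hδ : F.HasContent δ) :
    ∀ m : ℕ, 1 ≤ m → m ≤ n →
      ∑ i ∈ Finset.univ.filter (fun i : Fin n => (i : ℕ) < m), γ i ≤
        ∑ i ∈ Finset.univ.filter (fun i : Fin n => (i : ℕ) < m), δ i :=
  stmt2_general n γ F hF δ hδ
end

section
/- For every weak composition γ = (γ_1,…,γ_n) with k = max_i γ_i, the monomial x^γ = x_1^{γ_1}⋯x_n^{γ_n} is a finite ℤ[β]-linear combination x^γ = Σ_δ c_δ L_δ of Lascoux atoms, where every δ with c_δ ≠ 0 is a weak composition with n parts satisfying max_i δ_i ≤ k. Consequently, {L_γ : γ a weak composition with n parts} is a ℤ[β]-module basis of ℤ[β][x_1,…,x_n]. -/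
open Finset MvPolynomial

-- Section A : lex relation
def LexLt {n : ℕ} (a b : Fin n → ℕ) : Prop :=
  ∃ t : Fin n, (∀ s, s < t → a s = b s) ∧ a t < b t

theorem LexLt.irrefl {n : ℕ} (a : Fin n → ℕ) : ¬ LexLt a a := by
  rintro ⟨t, _, h⟩; exact lt_irrefl _ h

theorem LexLt.trans {n : ℕ} {a b c : Fin n → ℕ} (h1 : LexLt a b) (h2 : LexLt b c) :
    LexLt a c := by
  obtain ⟨t1, hp1, hl1⟩ := h1
  obtain ⟨t2, hp2, hl2⟩ := h2
  rcases lt_trichotomy t1 t2 with h | h | h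
  · exact ⟨t1, fun s hs => (hp1 s hs).trans (hp2 s (hs.trans h)),
      (hp2 t1 h) ▸ hl1⟩
  · exact ⟨t1, fun s hs => (hp1 s hs).trans (hp2 s (hs.trans_le h.le)),
      lt_trans hl1 (h ▸ hl2)⟩
  · exact ⟨t2, fun s hs => (hp1 s (hs.trans h)).trans (hp2 s hs),
      (hp1 t2 h) ▸ hl2⟩

theorem LexLt.total {n : ℕ} {a b : Fin n → ℕ} (h : a ≠ b) : LexLt a b ∨ LexLt b a := by
  have hne : (Finset.univ.filter (fun t => a t ≠ b t)).Nonempty := by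
    by_contra hc
    rw [Finset.not_nonempty_iff_eq_empty, Finset.filter_eq_empty_iff] at hc
    exact h (funext fun t => not_not.mp (hc (Finset.mem_univ t)))
  set m := (Finset.univ.filter (fun t => a t ≠ b t)).min' hne with hm
  have hmem := (Finset.univ.filter (fun t => a t ≠ b t)).min'_mem hne
  rw [Finset.mem_filter] at hmem
  have hpre : ∀ s, s < m → a s = b s := by
    intro s hs
    by_contra hc
    exact absurd (Finset.min'_le _ s (Finset.mem_filter.mpr ⟨Finset.mem_univ s, hc⟩))
      (not_le.mpr hs)
  rcases lt_or_gt_of_ne hmem.2 with h' | h'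
  · exact Or.inl ⟨m, hpre, h'⟩
  · exact Or.inr ⟨m, fun s hs => (hpre s hs).symm, h'⟩

/-- A finite nonempty set has a `LexLt`-minimal element. -/
theorem LexLt.exists_min {n : ℕ} (s : Finset (Fin n → ℕ)) (hs : s.Nonempty) :
    ∃ a ∈ s, ∀ b ∈ s, ¬ LexLt b a := by
  classical
  induction s using Finset.induction_on with
  | empty => exact absurd hs (by simp)
  | @insert x s hx ih =>
    rcases s.eq_empty_or_nonempty with rfl | hs'
    · exact ⟨x, Finset.mem_insert_self _ _, by
        intro b hb
        rw [Finset.mem_insert] at hb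
        rcases hb with rfl | hb
        · exact LexLt.irrefl b
        · simp at hb⟩
    · obtain ⟨m, hm, hmin⟩ := ih hs'
      by_cases hxm : LexLt x m
      · refine ⟨x, Finset.mem_insert_self _ _, ?_⟩
        intro b hb hbx
        rcases Finset.mem_insert.mp hb with rfl | hb
        · exact LexLt.irrefl b hbx
        · exact hmin b hb (hbx.trans hxm)
      · refine ⟨m, Finset.mem_insert_of_mem hm, ?_⟩
        intro b hb hbm
        rcases Finset.mem_insert.mp hb with rfl | hb
        · exact hxm hbm
        · exact hmin b hb hbm

namespace SVFilling

variable {n : ℕ} {γ : Fin n → ℕ}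

theorem ext' {F G : SVFilling n γ} (h : F.box = G.box) : F = G := by
  cases F; cases G; cases h; rfl

theorem box_nonempty (F : SVFilling n γ) (i : Fin n) {j : ℕ} (hj : j ≤ γ i) :
    (F.box i j).Nonempty := by
  rcases Nat.eq_zero_or_pos j with rfl | hj1
  · rw [F.basement]; exact Finset.singleton_nonempty _
  · exact F.nonempty i j hj1 hj

/-- Every entry of box `(i,j)` (inside the shape) is at most `i+1`. -/
theorem entry_le (F : SVFilling n γ) (hF : F.IsSemistandard) (i : Fin n) :
    ∀ j : ℕ, j ≤ γ i → ∀ e ∈ F.box i j, e ≤ (i : ℕ) + 1 := by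
  intro j
  induction j with
  | zero =>
    intro _ e he
    rw [F.basement] at he
    rw [Finset.mem_singleton] at he
    exact he.le
  | succ j ih =>
    intro hj e he
    obtain ⟨a, ha⟩ := F.box_nonempty i (Nat.le_of_succ_le hj)
    have h2 := hF.2.1 i (j + 1) (Nat.succ_le_succ (Nat.zero_le j)) hj a
      (by simpa using ha) e he
    exact h2.trans (ih (Nat.le_of_succ_le hj) a ha)

end SVFilling

/-- The row-constant filling: every box of row `i` is `{i+1}`. -/
def rowF (n : ℕ) (γ : Fin n → ℕ) : SVFilling n γ where
  box i j := if j ≤ γ i then {(i : ℕ) + 1} else ∅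
  basement i := by simp
  nonempty i j _ hj := by simp [hj]
  pos i j e he := by
    by_cases h : j ≤ γ i
    · simp [h] at he; omega
    · simp [h] at he
  outside i j hj := by simp [Nat.not_le.mpr hj]

theorem rowF_box {n : ℕ} (γ : Fin n → ℕ) (i : Fin n) (j : ℕ) (hj : j ≤ γ i) :
    (rowF n γ).box i j = {(i : ℕ) + 1} := if_pos hj

theorem rowF_anchor {n : ℕ} (γ : Fin n → ℕ) (i : Fin n) (j : ℕ) (hj : j ≤ γ i) :
    (rowF n γ).anchor i j = (i : ℕ) + 1 := by
  rw [SVFilling.anchor, rowF_box γ i j hj, Finset.sup_singleton, id]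

theorem rowF_semistandard (n : ℕ) (γ : Fin n → ℕ) : (rowF n γ).IsSemistandard := by
  refine ⟨?_, ?_, ?_, ?_⟩
  · intro j hj i i' hii' e he he'
    by_cases h : j ≤ γ i
    · by_cases h' : j ≤ γ i'
      · rw [rowF_box γ i j h, Finset.mem_singleton] at he
        rw [rowF_box γ i' j h', Finset.mem_singleton] at he'
        exact hii' (Fin.ext (by omega))
      · rw [(rowF n γ).outside i' j (Nat.not_le.mp h')] at he'
        exact absurd he' (Finset.notMem_empty e)
    · have := (rowF n γ).outside i j (Nat.not_le.mp h)
      rw [this] at he; exact absurd he (Finset.notMem_empty e)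
  · intro i j hj1 hj a ha b hb
    rw [rowF_box γ i (j-1) (le_trans (Nat.sub_le j 1) hj), Finset.mem_singleton] at ha
    rw [rowF_box γ i j hj, Finset.mem_singleton] at hb
    omega
  · intro i i' hii'
    have hlt : (i : ℕ) + 1 < (i' : ℕ) + 1 := by
      have := (Fin.lt_def.mp hii'); omega
    constructor
    · intro hle m hm
      rw [rowF_anchor γ i' (m+1) hm, rowF_anchor γ i (m+1) (hm.trans hle),
        rowF_anchor γ i m (le_trans (Nat.le_succ m) (hm.trans hle))]
      exact Or.inl ⟨hlt, le_refl _⟩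
    · intro hlt' m hm hm1
      rw [rowF_anchor γ i m hm, rowF_anchor γ i' (m+1) hm1,
        rowF_anchor γ i' m (le_trans (Nat.le_succ m) hm1)]
      exact Or.inr ⟨le_refl _, hlt⟩
  · intro i j hj1 hj e he hne i' _ _
    rw [rowF_box γ i j hj, Finset.mem_singleton] at he
    exact absurd (he.trans (rowF_anchor γ i j hj).symm) hne

theorem rowF_content {n : ℕ} (γ : Fin n → ℕ) (i : Fin n) :
    (rowF n γ).content ((i : ℕ) + 1) = γ i := by
  rw [SVFilling.content]
  rw [Finset.sum_eq_single i]
  · have : (Finset.Icc 1 (γ i)).filter (fun j => (i:ℕ)+1 ∈ (rowF n γ).box i j)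
        = Finset.Icc 1 (γ i) := by
      apply Finset.filter_true_of_mem
      intro j hj
      rw [Finset.mem_Icc] at hj
      rw [rowF_box γ i j hj.2]
      exact Finset.mem_singleton_self _
    rw [this, Nat.card_Icc]; omega
  · intro i' _ hne
    rw [Finset.card_eq_zero, Finset.filter_eq_empty_iff]
    intro j hj
    rw [Finset.mem_Icc] at hj
    rw [rowF_box γ i' j hj.2, Finset.mem_singleton]
    intro h
    exact hne (Fin.ext (by omega))
  · intro h; exact absurd (Finset.mem_univ i) h

theorem rowF_size {n : ℕ} (γ : Fin n → ℕ) : (rowF n γ).size = ∑ i, γ i := by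
  rw [SVFilling.size]
  apply Finset.sum_congr rfl
  intro i _
  rw [Finset.sum_congr rfl (fun j hj => ?_), Finset.sum_const, Nat.card_Icc,
    smul_eq_mul, mul_one]
  · omega
  · rw [Finset.mem_Icc] at hj
    rw [rowF_box γ i j hj.2, Finset.card_singleton]

namespace SVFilling

variable {n : ℕ} {γ : Fin n → ℕ}

/-- Values `≤ t` appear only in their own rows. -/
def Pure (F : SVFilling n γ) (t : ℕ) : Prop :=
  ∀ v (i : Fin n) (j : ℕ), 1 ≤ j → j ≤ γ i → v ∈ F.box i j → v ≤ t → (i : ℕ) = v - 1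

theorem Pure.mono {F : SVFilling n γ} {s t : ℕ} (h : F.Pure t) (hst : s ≤ t) :
    F.Pure s := fun v i j h1 h2 h3 h4 => h v i j h1 h2 h3 (h4.trans hst)

theorem pure_zero (F : SVFilling n γ) : F.Pure 0 := by
  intro v i j h1 h2 h3 h4
  exact absurd (F.pos i j v h3) (by omega)

theorem Pure.box_eq {F : SVFilling n γ} (hF : F.IsSemistandard) {t : ℕ}
    (hp : F.Pure t) {i : Fin n} (hi : (i : ℕ) = t) {j : ℕ} (h1 : 1 ≤ j) (h2 : j ≤ γ i) :
    F.box i j = {t + 1} := by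
  rw [Finset.eq_singleton_iff_nonempty_unique_mem]
  refine ⟨F.nonempty i j h1 h2, ?_⟩
  intro e he
  have hle : e ≤ t + 1 := hi ▸ F.entry_le hF i j h2 e he
  have hge : 1 ≤ e := F.pos i j e he
  by_contra hne
  have het : e ≤ t := by omega
  have := hp e i j h1 h2 he het
  omega

theorem Pure.content_eq {F : SVFilling n γ} (hF : F.IsSemistandard) {t : ℕ}
    (hp : F.Pure t) {v : ℕ} (h1 : 1 ≤ v) (h2 : v ≤ t) (h3 : v ≤ n) :
    F.content v = γ ⟨v - 1, by omega⟩ := by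
  set i0 : Fin n := ⟨v - 1, by omega⟩ with hi0
  rw [content, Finset.sum_eq_single i0]
  · have hfil : (Finset.Icc 1 (γ i0)).filter (fun j => v ∈ F.box i0 j)
        = Finset.Icc 1 (γ i0) := by
      apply Finset.filter_true_of_mem
      intro j hj
      rw [Finset.mem_Icc] at hj
      have hbox := Pure.box_eq hF (hp.mono (show v - 1 ≤ t by omega)) (by simp [hi0]) hj.1 hj.2
      rw [hbox, Finset.mem_singleton]; omega
    rw [hfil, Nat.card_Icc]; omega
  · intro i' _ hne
    rw [Finset.card_eq_zero, Finset.filter_eq_empty_iff]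
    intro j hj hv
    rw [Finset.mem_Icc] at hj
    have := hp v i' j hj.1 hj.2 hv h2
    exact hne (Fin.ext (by simp [hi0, this]))
  · intro h; exact absurd (Finset.mem_univ i0) h

/-- The key dichotomy: either `F` is the row-constant filling, or its content is
lexicographically strictly greater than `γ`. -/
theorem content_dichotomy (F : SVFilling n γ) (hF : F.IsSemistandard) :
    F = rowF n γ ∨ LexLt γ (fun i => F.content ((i : ℕ) + 1)) := by
  classical
  by_cases hp : F.Pure n
  · left
    apply ext'
    funext i j
    rcases Nat.eq_zero_or_pos j with rfl | hj1
    · rw [F.basement, (rowF n γ).basement]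
    by_cases hj : j ≤ γ i
    · rw [Pure.box_eq hF (hp.mono (by omega : (i : ℕ) ≤ n)) rfl hj1 hj,
        rowF_box γ i j hj]
    · rw [F.outside i j (Nat.not_le.mp hj), (rowF n γ).outside i j (Nat.not_le.mp hj)]
  · right
    have hex : ∃ t, ¬ F.Pure t := ⟨n, hp⟩
    set t := Nat.find hex with htdef
    have ht : ¬ F.Pure t := Nat.find_spec hex
    have ht1 : 1 ≤ t := by
      rcases Nat.eq_zero_or_pos t with h0 | h; · exact absurd (h0 ▸ F.pure_zero) ht
      · exact h
    have htn : t ≤ n := Nat.find_min' hex hp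
    have hps : F.Pure (t - 1) := by
      have := Nat.find_min hex (show t - 1 < t by omega)
      exact not_not.mp this
    -- extract a violating occurrence of value t (at row ≠ t-1)
    have hviol : ∃ (v : ℕ) (i : Fin n) (j : ℕ), 1 ≤ j ∧ j ≤ γ i ∧ v ∈ F.box i j ∧ v ≤ t ∧
        (i : ℕ) ≠ v - 1 := by
      by_contra hc
      push_neg at hc
      exact ht (fun v i j h1 h2 h3 h4 => hc v i j h1 h2 h3 h4)
    obtain ⟨v, i, j, hj1, hj2, hmem, hvt, hine⟩ := hviol
    have hv : v = t := by
      rcases Nat.lt_or_ge v t with h | h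
      · exact absurd (hps v i j hj1 hj2 hmem (by omega)) hine
      · omega
    rw [hv] at hmem hine
    have hsn : t - 1 < n := by omega
    set i0 : Fin n := ⟨t - 1, hsn⟩ with hi0
    refine ⟨i0, ?_, ?_⟩
    · intro s hs
      have hsv : (s : ℕ) + 1 ≤ t - 1 := by
        have := Fin.lt_def.mp hs; simp [hi0] at this; omega
      have := Pure.content_eq hF hps (by omega) hsv (by omega)
      show γ s = F.content ((s : ℕ) + 1)
      rw [this]
      exact congrArg γ (Fin.ext (by simp)).symm
    · show γ i0 < F.content ((i0 : ℕ) + 1)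
      have hvv : (i0 : ℕ) + 1 = t := by simp [hi0]; omega
      rw [hvv, content]
      have hii0 : i ≠ i0 := fun h => hine (by rw [h])
      have hsum : ((Finset.Icc 1 (γ i0)).filter (fun j => t ∈ F.box i0 j)).card +
          ((Finset.Icc 1 (γ i)).filter (fun j => t ∈ F.box i j)).card ≤
          ∑ i' : Fin n, ((Finset.Icc 1 (γ i')).filter (fun j => t ∈ F.box i' j)).card := by
        have hsub := Finset.sum_le_sum_of_subset
          (f := fun i' => ((Finset.Icc 1 (γ i')).filter (fun j => t ∈ F.box i' j)).card)
          (show ({i0, i} : Finset (Fin n)) ⊆ Finset.univ from Finset.subset_univ _)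
        rw [Finset.sum_pair hii0.symm] at hsub
        exact hsub
      have hterm0 : ((Finset.Icc 1 (γ i0)).filter (fun j => t ∈ F.box i0 j)).card
          = γ i0 := by
        have hfil : (Finset.Icc 1 (γ i0)).filter (fun j => t ∈ F.box i0 j)
            = Finset.Icc 1 (γ i0) := by
          apply Finset.filter_true_of_mem
          intro j' hj'
          rw [Finset.mem_Icc] at hj'
          rw [Pure.box_eq hF hps (by simp [hi0]) hj'.1 hj'.2, Finset.mem_singleton]
          omega
        rw [hfil, Nat.card_Icc]; omega
      have hterm1 : 1 ≤ ((Finset.Icc 1 (γ i)).filter (fun j => t ∈ F.box i j)).card := by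
        rw [Nat.one_le_iff_ne_zero, Ne, Finset.card_eq_zero]
        intro h
        have : j ∈ (Finset.Icc 1 (γ i)).filter (fun j => t ∈ F.box i j) :=
          Finset.mem_filter.mpr ⟨Finset.mem_Icc.mpr ⟨hj1, hj2⟩, hmem⟩
        rw [h] at this
        exact absurd this (Finset.notMem_empty j)
      omega

end SVFilling

namespace SVFilling

variable {n : ℕ} {γ : Fin n → ℕ}

theorem content_le (F : SVFilling n γ) (hF : F.IsSemistandard) (v : ℕ) :
    F.content v ≤ Finset.univ.sup γ := by
  classical
  rw [SVFilling.content]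
  set A : Fin n → Finset ℕ := fun i => (Finset.Icc 1 (γ i)).filter (fun j => v ∈ F.box i j)
    with hA
  have hdisj : ∀ i ∈ Finset.univ, ∀ i' ∈ Finset.univ, i ≠ i' → Disjoint (A i) (A i') := by
    intro i _ i' _ hne
    rw [Finset.disjoint_left]
    intro j hj hj'
    rw [hA, Finset.mem_filter, Finset.mem_Icc] at hj hj'
    exact hF.1 j hj.1.1 i i' hne v hj.2 hj'.2
  calc ∑ i, (A i).card = (Finset.univ.biUnion A).card := (Finset.card_biUnion hdisj).symm
    _ ≤ (Finset.Icc 1 (Finset.univ.sup γ)).card := Finset.card_le_card (by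
        intro j hj
        rw [Finset.mem_biUnion] at hj
        obtain ⟨i, _, hj⟩ := hj
        rw [hA, Finset.mem_filter, Finset.mem_Icc] at hj
        exact Finset.mem_Icc.mpr ⟨hj.1.1, hj.1.2.trans (Finset.le_sup (Finset.mem_univ i))⟩)
    _ = Finset.univ.sup γ := by rw [Nat.card_Icc]; omega

theorem box_subset (F : SVFilling n γ) (hF : F.IsSemistandard) (i : Fin n) (j : ℕ) :
    F.box i j ⊆ Finset.range (n + 2) := by
  intro e he
  rw [Finset.mem_range]
  rcases Nat.eq_zero_or_pos j with rfl | hj1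
  · rw [F.basement, Finset.mem_singleton] at he
    omega
  by_cases hj : j ≤ γ i
  · have := F.entry_le hF i j hj e he
    have := i.isLt
    omega
  · rw [F.outside i j (Nat.not_le.mp hj)] at he
    exact absurd he (Finset.notMem_empty e)

instance : Finite {F : SVFilling n γ // F.IsSemistandard} := by
  classical
  set K := Finset.univ.sup γ with hK
  apply Finite.of_injective (α := {F : SVFilling n γ // F.IsSemistandard})
    (β := Fin n → Fin (K + 1) → {s : Finset ℕ // s ∈ (Finset.range (n + 2)).powerset})
    (f := fun F i j => ⟨(F : SVFilling n γ).box i (j : ℕ),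
      Finset.mem_powerset.mpr (box_subset _ F.2 i (j : ℕ))⟩)
  intro F G h
  apply Subtype.ext
  apply ext'
  funext i j
  by_cases hj : j ≤ K
  · have := congrFun (congrFun h i) ⟨j, by omega⟩
    exact Subtype.ext_iff.mp this
  · have hKi : γ i ≤ K := Finset.le_sup (Finset.mem_univ i)
    rw [(F : SVFilling n γ).outside i j (by omega), (G : SVFilling n γ).outside i j (by omega)]

end SVFilling

section Coeffs

variable {n : ℕ} (γ : Fin n → ℕ)

noncomputable instance : Fintype {F : SVFilling n γ // F.IsSemistandard} :=
  Fintype.ofFinite _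

theorem Lascoux_eq_sum :
    Lascoux n γ = ∑ F : {F : SVFilling n γ // F.IsSemistandard},
      MvPolynomial.monomial
        (Finsupp.equivFunOnFinite.symm
          (fun i : Fin n => (F : SVFilling n γ).content ((i : ℕ) + 1)))
        (Polynomial.X ^ ((F : SVFilling n γ).size - ∑ i, γ i)) :=
  finsum_eq_sum_of_fintype _

theorem coe_equivFunOnFinite_symm (f : Fin n → ℕ) :
    ⇑(Finsupp.equivFunOnFinite.symm f) = f := rfl

theorem rowF_content_fun : (fun i : Fin n => (rowF n γ).content ((i : ℕ) + 1)) = γ :=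
  funext (rowF_content γ)

theorem coeff_Lascoux_self :
    MvPolynomial.coeff (Finsupp.equivFunOnFinite.symm γ) (Lascoux n γ) = 1 := by
  classical
  rw [Lascoux_eq_sum, MvPolynomial.coeff_sum]
  rw [Finset.sum_eq_single (⟨rowF n γ, rowF_semistandard n γ⟩ :
      {F : SVFilling n γ // F.IsSemistandard})]
  · rw [MvPolynomial.coeff_monomial, if_pos (by rw [rowF_content_fun]),
      rowF_size, Nat.sub_self, pow_zero]
  · intro F _ hne
    rw [MvPolynomial.coeff_monomial, if_neg]
    intro h
    have h' : (fun i : Fin n => (F : SVFilling n γ).content ((i : ℕ) + 1)) = γ :=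
      Finsupp.equivFunOnFinite.symm.injective h
    rcases SVFilling.content_dichotomy (F : SVFilling n γ) F.2 with h2 | h2
    · exact hne (Subtype.ext h2)
    · rw [h'] at h2
      exact LexLt.irrefl γ h2
  · intro h; exact absurd (Finset.mem_univ _) h

theorem coeff_Lascoux_ne_zero {d : Fin n →₀ ℕ}
    (h : MvPolynomial.coeff d (Lascoux n γ) ≠ 0) :
    ((⇑d = γ) ∨ LexLt γ ⇑d) ∧ ∀ i, d i ≤ Finset.univ.sup γ := by
  classical
  rw [Lascoux_eq_sum, MvPolynomial.coeff_sum] at h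
  obtain ⟨F, -, hF⟩ := Finset.exists_ne_zero_of_sum_ne_zero h
  rw [MvPolynomial.coeff_monomial] at hF
  have hd : Finsupp.equivFunOnFinite.symm
      (fun i : Fin n => (F : SVFilling n γ).content ((i : ℕ) + 1)) = d := by
    by_contra hc; rw [if_neg hc] at hF; exact hF rfl
  have hd' : ⇑d = fun i : Fin n => (F : SVFilling n γ).content ((i : ℕ) + 1) := by
    rw [← hd, coe_equivFunOnFinite_symm]
  constructor
  · rcases SVFilling.content_dichotomy (F : SVFilling n γ) F.2 with h2 | h2
    · left; rw [hd', h2, rowF_content_fun]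
    · right; rw [hd']; exact h2
  · intro i
    have : d i = (F : SVFilling n γ).content ((i : ℕ) + 1) := congrFun hd' i
    rw [this]
    exact SVFilling.content_le _ F.2 _

end Coeffs

theorem lascoux_linearIndependent (n : ℕ) :
    LinearIndependent (Polynomial ℤ) (Lascoux n) := by
  rw [linearIndependent_iff]
  intro l hl
  by_contra hne
  have hsupp : l.support.Nonempty := Finsupp.support_nonempty_iff.mpr hne
  obtain ⟨γ0, hγ0, hmin⟩ := LexLt.exists_min l.support hsupp
  have h0 := congrArg (MvPolynomial.coeff (Finsupp.equivFunOnFinite.symm γ0)) hl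
  rw [Finsupp.linearCombination_apply, Finsupp.sum, MvPolynomial.coeff_sum,
    MvPolynomial.coeff_zero] at h0
  rw [Finset.sum_eq_single γ0] at h0
  · rw [MvPolynomial.coeff_smul, coeff_Lascoux_self, smul_eq_mul, mul_one] at h0
    exact Finsupp.mem_support_iff.mp hγ0 h0
  · intro γ hγ hneγ
    rw [MvPolynomial.coeff_smul]
    have hz : MvPolynomial.coeff (Finsupp.equivFunOnFinite.symm γ0) (Lascoux n γ) = 0 := by
      by_contra hc
      obtain ⟨hor, -⟩ := coeff_Lascoux_ne_zero γ hc
      rw [coe_equivFunOnFinite_symm] at hor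
      rcases hor with h | h
      · exact hneγ h.symm
      · exact hmin γ hγ h
    rw [hz, smul_zero]
  · intro h; exact absurd hγ0 h

/-- The linear map sending a coefficient table to the corresponding combination of
Lascoux atoms. -/
noncomputable def Phi (n : ℕ) : ((Fin n → ℕ) →₀ Polynomial ℤ) →ₗ[Polynomial ℤ]
    MvPolynomial (Fin n) (Polynomial ℤ) :=
  Finsupp.lsum ℕ (fun δ => LinearMap.toSpanSingleton (Polynomial ℤ) _ (Lascoux n δ))

theorem Phi_apply (n : ℕ) (c : (Fin n → ℕ) →₀ Polynomial ℤ) :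
    Phi n c = c.sum fun δ p => MvPolynomial.C p * Lascoux n δ := by
  rw [Phi, Finsupp.lsum_apply]
  exact Finsupp.sum_congr fun δ _ => (MvPolynomial.smul_eq_C_mul _ _)

theorem Phi_single (n : ℕ) (γ : Fin n → ℕ) (p : Polynomial ℤ) :
    Phi n (Finsupp.single γ p) = p • Lascoux n γ := by
  rw [Phi]
  simp [Finsupp.sum_single_index]

theorem lascoux_expand (n K : ℕ) :
    ∀ γ : Fin n → ℕ, (∀ i, γ i ≤ K) →
      ∃ c : (Fin n → ℕ) →₀ Polynomial ℤ,
        (∀ δ ∈ c.support, ∀ i : Fin n, δ i ≤ K) ∧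
        (MvPolynomial.monomial (Finsupp.equivFunOnFinite.symm γ) (1 : Polynomial ℤ)) =
          Phi n c := by
  classical
  set T := {f : Fin n → ℕ // ∀ i, f i ≤ K} with hT
  haveI : Finite T := by
    apply Finite.of_injective (β := Fin n → Fin (K + 1))
      (f := fun x i => ⟨x.1 i, by have := x.2 i; omega⟩)
    intro x y h
    apply Subtype.ext
    funext i
    exact congrArg Fin.val (congrFun h i)
  set rr : T → T → Prop := fun x y => LexLt y.1 x.1 with hrr
  haveI : IsTrans T rr := ⟨fun a b c hab hbc => LexLt.trans hbc hab⟩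
  haveI : IsIrrefl T rr := ⟨fun a => LexLt.irrefl a.1⟩
  have hwf : WellFounded rr := Finite.wellFounded_of_trans_of_irrefl rr
  suffices H : ∀ x : T, ∃ c : (Fin n → ℕ) →₀ Polynomial ℤ,
      (∀ δ ∈ c.support, ∀ i : Fin n, δ i ≤ K) ∧
      (MvPolynomial.monomial (Finsupp.equivFunOnFinite.symm x.1) (1 : Polynomial ℤ)) =
        Phi n c by
    intro γ hγ; exact H ⟨γ, hγ⟩
  intro x
  induction x using hwf.induction with
  | _ x IH =>
  set γ := x.1 with hγdef
  set e := Finsupp.equivFunOnFinite.symm γ with he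
  set R := Lascoux n γ - MvPolynomial.monomial e 1 with hR
  have hsupR : ∀ d ∈ R.support, LexLt γ ⇑d ∧ ∀ i, d i ≤ K := by
    intro d hd
    have hcd : MvPolynomial.coeff d R ≠ 0 := MvPolynomial.mem_support_iff.mp hd
    have hne : d ≠ e := by
      intro h
      rw [h, hR, MvPolynomial.coeff_sub, he, coeff_Lascoux_self,
        MvPolynomial.coeff_monomial, if_pos rfl, sub_self] at hcd
      exact hcd rfl
    have hcoeff : MvPolynomial.coeff d (Lascoux n γ) ≠ 0 := by
      rw [hR, MvPolynomial.coeff_sub, MvPolynomial.coeff_monomial,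
        if_neg (Ne.symm hne), sub_zero] at hcd
      exact hcd
    obtain ⟨hor, hb⟩ := coeff_Lascoux_ne_zero γ hcoeff
    constructor
    · rcases hor with h | h
      · exact absurd (Finsupp.ext (fun i => congrFun h i) :
          d = Finsupp.equivFunOnFinite.symm γ) hne
      · exact h
    · intro i
      exact (hb i).trans (Finset.sup_le (fun i' _ => x.2 i'))
  have hstep : ∀ d ∈ R.support, ∃ c : (Fin n → ℕ) →₀ Polynomial ℤ,
      (∀ δ ∈ c.support, ∀ i : Fin n, δ i ≤ K) ∧
      (MvPolynomial.monomial d (1 : Polynomial ℤ)) = Phi n c := by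
    intro d hd
    obtain ⟨h1, h2⟩ := hsupR d hd
    obtain ⟨c, hc1, hc2⟩ := IH ⟨⇑d, h2⟩ h1
    have heq : Finsupp.equivFunOnFinite.symm ((⟨⇑d, h2⟩ : T) : Fin n → ℕ) = d :=
      Finsupp.equivFunOnFinite_symm_coe d
    rw [heq] at hc2
    exact ⟨c, hc1, hc2⟩
  choose! cf hcf1 hcf2 using hstep
  refine ⟨Finsupp.single γ 1 - ∑ d ∈ R.support, R.coeff d • cf d, ?_, ?_⟩
  · intro δ hδ i
    by_cases hδγ : δ = γ
    · subst hδγ; exact x.2 i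
    have hc : (∑ d ∈ R.support, R.coeff d • cf d) δ ≠ 0 := by
      intro h0
      apply Finsupp.mem_support_iff.mp hδ
      rw [Finsupp.sub_apply, h0, Finsupp.single_apply, if_neg (Ne.symm hδγ), sub_zero]
    rw [Finsupp.finset_sum_apply] at hc
    obtain ⟨d, hd, hd0⟩ := Finset.exists_ne_zero_of_sum_ne_zero hc
    rw [Finsupp.smul_apply, smul_eq_mul] at hd0
    have : (cf d) δ ≠ 0 := fun h => hd0 (by rw [h, mul_zero])
    exact hcf1 d hd δ (Finsupp.mem_support_iff.mpr this) i
  · rw [map_sub, map_sum, Phi_single]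
    have hsum : ∑ d ∈ R.support, Phi n (R.coeff d • cf d) = R := by
      rw [Finset.sum_congr rfl (fun d hd => ?_)]
      · exact MvPolynomial.support_sum_monomial_coeff R
      · rw [map_smul, ← hcf2 d hd]
        rw [MvPolynomial.smul_monomial, smul_eq_mul, mul_one]
    rw [hsum, hR, one_smul, sub_sub_cancel]

/-- Every monomial `x^γ` is a finite `ℤ[β]`-linear combination of Lascoux
atoms `L_δ` with all `δ` appearing having `max_i δ_i ≤ max_i γ_i`; consequently the Lascoux
atoms form a `ℤ[β]`-module basis of `ℤ[β][x_1, …, x_n]` (they are linearly independent and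
span). -/
theorem stmt6 (n : ℕ) (hn : 1 ≤ n) :
    (∀ γ : Fin n → ℕ, ∃ c : (Fin n → ℕ) →₀ Polynomial ℤ,
      (∀ δ ∈ c.support, ∀ i : Fin n, δ i ≤ Finset.univ.sup γ) ∧
      (MvPolynomial.monomial (Finsupp.equivFunOnFinite.symm γ) (1 : Polynomial ℤ)) =
        c.sum fun δ p => MvPolynomial.C p * Lascoux n δ) ∧
    LinearIndependent (Polynomial ℤ) (Lascoux n) ∧
    Submodule.span (Polynomial ℤ) (Set.range (Lascoux n)) = ⊤ := by
  refine ⟨?_, lascoux_linearIndependent n, ?_⟩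
  · intro γ
    obtain ⟨c, hc1, hc2⟩ := lascoux_expand n (Finset.univ.sup γ) γ
      (fun i => Finset.le_sup (Finset.mem_univ i))
    exact ⟨c, hc1, by rw [hc2, Phi_apply]⟩
  · rw [Submodule.eq_top_iff']
    intro p
    induction p using MvPolynomial.induction_on' with
    | monomial u a =>
      obtain ⟨c, -, hc2⟩ := lascoux_expand n (Finset.univ.sup ⇑u) ⇑u
        (fun i => Finset.le_sup (Finset.mem_univ i))
      rw [Finsupp.equivFunOnFinite_symm_coe u] at hc2
      have hu : MvPolynomial.monomial u a = a • Phi n c := by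
        rw [← hc2, MvPolynomial.smul_monomial, smul_eq_mul, mul_one]
      rw [hu]
      apply Submodule.smul_mem
      rw [Phi_apply]
      apply Submodule.sum_mem
      intro δ _
      show MvPolynomial.C (c δ) * Lascoux n δ ∈ _
      rw [← MvPolynomial.smul_eq_C_mul]
      exact Submodule.smul_mem _ _ (Submodule.subset_span (Set.mem_range_self δ))
    | add p q hp hq => exact Submodule.add_mem _ hp hq
end

section
/- Let α be a composition, i ≥ 1, and T ∈ SetCompTab(α) such that no box of T contains the value i+1. Then the filling T̂ obtained from T by replacing every occurrence of i with i+1 in every box is again an element of SetCompTab(α). -/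
/-!
Since `v + 1` does not occur in `T`, replacing `v` by `v + 1` restricts to a strictly increasing
map on the values of `T` (and on `0`, the anchor of an empty box). Conditions (Q1)–(Q3) only
compare entries and anchors by `<`, `≤` and `=`, and a strictly increasing map commutes with
taking maxima, so all of them survive the relabelling.
-/

open Finset MvPolynomial

/-- A set-valued filling of the composition shape `α` (row `i : Fin k` is the `(i+1)`-st
row): box `(i, j)` for `1 ≤ j ≤ α i` carries a nonempty finite set of positive integers;
boxes outside the shape (including the column `j = 0`: there is no basement) are empty. -/
structure SVCompTab (k : ℕ) (α : Fin k → ℕ) where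
  box : Fin k → ℕ → Finset ℕ
  nonempty : ∀ i : Fin k, ∀ j : ℕ, 1 ≤ j → j ≤ α i → (box i j).Nonempty
  pos : ∀ i : Fin k, ∀ j : ℕ, ∀ e ∈ box i j, 1 ≤ e
  outside : ∀ i : Fin k, ∀ j : ℕ, (j = 0 ∨ α i < j) → box i j = ∅

namespace SVCompTab

variable {k : ℕ} {α : Fin k → ℕ}

/-- The anchor (= largest) entry of box `(i, j)`. -/
def anchor (T : SVCompTab k α) (i : Fin k) (j : ℕ) : ℕ := (T.box i j).sup id

/-- Semistandardness conditions (Q1)-(Q3) for set-valued composition tableaux. -/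
def IsSemistandard (T : SVCompTab k α) : Prop :=
  (∀ i : Fin k, ∀ j : ℕ, 2 ≤ j → j ≤ α i →
      ∀ a ∈ T.box i (j - 1), ∀ b ∈ T.box i j, b ≤ a) ∧
  (∀ i i' : Fin k, i < i' → 1 ≤ α i → 1 ≤ α i' → T.anchor i 1 < T.anchor i' 1) ∧
  (∀ j : ℕ, 1 ≤ j → ∀ i i' : Fin k, i ≠ i' → j ≤ α i → j ≤ α i' →
      T.anchor i j ≠ T.anchor i' j) ∧
  (∀ i i' : Fin k, i < i' →
      (α i' ≤ α i → ∀ m : ℕ, 1 ≤ m → m + 1 ≤ α i' →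
        InvTriple (T.anchor i' (m + 1)) (T.anchor i (m + 1)) (T.anchor i m)) ∧
      (α i < α i' → ∀ m : ℕ, 1 ≤ m → m ≤ α i → m + 1 ≤ α i' →
        InvTriple (T.anchor i m) (T.anchor i' (m + 1)) (T.anchor i' m))) ∧
  (∀ i : Fin k, ∀ j : ℕ, 1 ≤ j → j ≤ α i → ∀ e ∈ T.box i j, e ≠ T.anchor i j →
      ∀ i' : Fin k, i' < i → j ≤ α i' →
        ¬ (e < T.anchor i' j ∧ (j = α i' ∨ T.anchor i' (j + 1) ≤ e)))

/-- The number of boxes of `T` containing the value `v`. -/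
def content (T : SVCompTab k α) (v : ℕ) : ℕ :=
  ∑ i : Fin k, ((Finset.Icc 1 (α i)).filter (fun j => v ∈ T.box i j)).card

/-- `|T|`, the total number of entries of `T`. -/
def size (T : SVCompTab k α) : ℕ :=
  ∑ i : Fin k, ∑ j ∈ Finset.Icc 1 (α i), (T.box i j).card

end SVCompTab


theorem Finset.sup_image_id_of_monotoneOn {α β : Type*} [LinearOrder α] [OrderBot α]
    [LinearOrder β] [OrderBot β] [DecidableEq β] {f : α → β} {s : Set α} (hf : MonotoneOn f s)
    {t : Finset α} (ht : ↑t ⊆ s) (hf0 : f ⊥ = ⊥) : (t.image f).sup id = f (t.sup id) := by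
  rcases t.eq_empty_or_nonempty with rfl | hne
  · simp [hf0]
  obtain ⟨m, hm, hsup⟩ := t.exists_mem_eq_sup hne id
  rw [hsup]
  refine le_antisymm (Finset.sup_le ?_) (le_sup (f := id) (mem_image_of_mem f hm))
  rintro _ hb
  rw [mem_image] at hb
  obtain ⟨b, hb, rfl⟩ := hb
  exact hf (ht hb) (ht hm) (hsup ▸ le_sup (f := id) hb)

theorem invTriple_apply_iff {f : ℕ → ℕ} {s : Set ℕ} (hf : StrictMonoOn f s) {a b c : ℕ}
    (ha : a ∈ s) (hb : b ∈ s) (hc : c ∈ s) :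
    InvTriple (f b) (f a) (f c) ↔ InvTriple b a c := by
  simp only [InvTriple, hf.lt_iff_lt, hf.le_iff_le, ha, hb, hc]

namespace SVCompTab

variable {k : ℕ} {α : Fin k → ℕ}

def map (T : SVCompTab k α) (f : ℕ → ℕ) (hf : ∀ e, 1 ≤ e → 1 ≤ f e) : SVCompTab k α where
  box i j := (T.box i j).image f
  nonempty i j h1 h2 := (T.nonempty i j h1 h2).image f
  pos i j e he := by
    rw [mem_image] at he
    obtain ⟨e, he, rfl⟩ := he
    exact hf e (T.pos i j e he)
  outside i j h := by rw [T.outside i j h, image_empty]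

theorem anchor_mem (T : SVCompTab k α) {s : Set ℕ} (hs : ∀ i j, ↑(T.box i j) ⊆ s) (h0 : 0 ∈ s)
    (i : Fin k) (j : ℕ) : T.anchor i j ∈ s := by
  rcases (T.box i j).eq_empty_or_nonempty with h | h
  · simpa [anchor, h] using h0
  · obtain ⟨m, hm, hsup⟩ := (T.box i j).exists_mem_eq_sup h id
    rw [anchor, hsup]
    exact hs i j hm

section Relabel

variable {T T' : SVCompTab k α} {f : ℕ → ℕ} {s : Set ℕ}

theorem anchor_eq_apply_anchor (hf : MonotoneOn f s) (hs : ∀ i j, ↑(T.box i j) ⊆ s)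
    (hf0 : f 0 = 0) (hbox : ∀ i j, T'.box i j = (T.box i j).image f) (i : Fin k) (j : ℕ) :
    T'.anchor i j = f (T.anchor i j) := by
  rw [anchor, hbox]
  exact sup_image_id_of_monotoneOn hf (hs i j) hf0

theorem IsSemistandard.of_box_eq_image (hT : T.IsSemistandard) (hf : StrictMonoOn f s)
    (hs : ∀ i j, ↑(T.box i j) ⊆ s) (h0 : 0 ∈ s) (hf0 : f 0 = 0)
    (hbox : ∀ i j, T'.box i j = (T.box i j).image f) : T'.IsSemistandard := by
  obtain ⟨hrow, hfirst, hcol, htriple, hnonmax⟩ := hT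
  have hanchor := anchor_eq_apply_anchor hf.monotoneOn hs hf0 hbox
  have hmem := T.anchor_mem hs h0
  refine ⟨?_, ?_, ?_, ?_, ?_⟩
  · intro i j h2 hj a ha b hb
    rw [hbox, mem_image] at ha hb
    obtain ⟨a, ha, rfl⟩ := ha
    obtain ⟨b, hb, rfl⟩ := hb
    exact hf.monotoneOn (hs _ _ hb) (hs _ _ ha) (hrow i j h2 hj a ha b hb)
  · intro i i' hii' h1 h1'
    rw [hanchor, hanchor, hf.lt_iff_lt (hmem _ _) (hmem _ _)]
    exact hfirst i i' hii' h1 h1'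
  · intro j hj i i' hii' hji hji'
    rw [hanchor, hanchor, hf.injOn.ne_iff (hmem _ _) (hmem _ _)]
    exact hcol j hj i i' hii' hji hji'
  · intro i i' hii'
    simp only [hanchor, invTriple_apply_iff hf (hmem _ _) (hmem _ _) (hmem _ _)]
    exact htriple i i' hii'
  · intro i j h1 hj e he hne i' hi'i hji'
    rw [hbox, mem_image] at he
    obtain ⟨e, he, rfl⟩ := he
    rw [hanchor, hf.injOn.ne_iff (hs _ _ he) (hmem _ _)] at hne
    rw [hanchor, hanchor, hf.lt_iff_lt (hs _ _ he) (hmem _ _),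
      hf.le_iff_le (hmem _ _) (hs _ _ he)]
    exact hnonmax i j h1 hj e he hne i' hi'i hji'

end Relabel

end SVCompTab

def bump (v e : ℕ) : ℕ := if e = v then v + 1 else e

theorem le_bump (v e : ℕ) : e ≤ bump v e := by
  unfold bump; split_ifs <;> omega

theorem bump_zero {v : ℕ} (hv : 1 ≤ v) : bump v 0 = 0 := by
  unfold bump; split_ifs <;> omega

theorem bump_strictMonoOn (v : ℕ) : StrictMonoOn (bump v) {v + 1}ᶜ := by
  intro a ha b hb hab
  simp only [Set.mem_compl_iff, Set.mem_singleton_iff] at ha hb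
  unfold bump; split_ifs <;> omega

theorem stmt12_general (k : ℕ) (α : Fin k → ℕ)
    (T : SVCompTab k α) (hT : T.IsSemistandard) (v : ℕ) (hv : 1 ≤ v)
    (hno : ∀ i : Fin k, ∀ j : ℕ, v + 1 ∉ T.box i j) :
    (∃ T' : SVCompTab k α, ∀ i : Fin k, ∀ j : ℕ,
        T'.box i j = (T.box i j).image (fun e => if e = v then v + 1 else e)) ∧
    (∀ T' : SVCompTab k α,
      (∀ i : Fin k, ∀ j : ℕ,
        T'.box i j = (T.box i j).image (fun e => if e = v then v + 1 else e)) →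
      T'.IsSemistandard) := by
  have hs : ∀ i j, ↑(T.box i j) ⊆ ({v + 1}ᶜ : Set ℕ) := fun i j e he he' => hno i j (he' ▸ he)
  refine ⟨⟨T.map (bump v) fun e he => he.trans (le_bump v e), fun _ _ => rfl⟩, fun T' hbox => ?_⟩
  exact hT.of_box_eq_image (bump_strictMonoOn v) hs (by simp) (bump_zero hv) hbox

/-- If `T` is a semistandard set-valued composition tableau of shape `α`
in which the value `v + 1` does not occur, then the filling obtained from `T` by replacing
every occurrence of `v` by `v + 1` exists and is again a semistandard set-valued
composition tableau of shape `α`. -/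
theorem stmt12 (k : ℕ) (hk : 1 ≤ k) (α : Fin k → ℕ) (hα : ∀ i, 1 ≤ α i)
    (T : SVCompTab k α) (hT : T.IsSemistandard) (v : ℕ) (hv : 1 ≤ v)
    (hno : ∀ i : Fin k, ∀ j : ℕ, v + 1 ∉ T.box i j) :
    (∃ T' : SVCompTab k α, ∀ i : Fin k, ∀ j : ℕ,
        T'.box i j = (T.box i j).image (fun e => if e = v then v + 1 else e)) ∧
    (∀ T' : SVCompTab k α,
      (∀ i : Fin k, ∀ j : ℕ,
        T'.box i j = (T.box i j).image (fun e => if e = v then v + 1 else e)) →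
      T'.IsSemistandard) :=
  stmt12_general k α T hT v hv hno
end
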